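/- (Pósa's theorem, base comparison) The vertex set of every finite simple graph G can be partitioned into at most α(G) vertex-disjoint cycles, where a single vertex or a single edge is accepted as a cycle. -/

import Mathlib

open Finset

/-- A (possibly degenerate) linear cycle in a hypergraph: a single vertex,
a single hyperedge, or a cyclic sequence of hyperedges. -/
inductive LinCyc (V : Type*) where
  | vert : V → LinCyc V
  | edge : Finset V → LinCyc V
  | cyc : (n : ℕ) → (Fin n → Finset V) → LinCyc V

/-- The vertex set of a (degenerate) linear cycle. -/
def LinCyc.verts {V : Type*} [DecidableEq V] : LinCyc V → Finset V
  | .vert v => {v}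
  | .edge h => h
  | .cyc _ e => Finset.univ.biUnion e

/-- The set of hyperedges of a (degenerate) linear cycle. -/
def LinCyc.edgeSet {V : Type*} [DecidableEq V] : LinCyc V → Finset (Finset V)
  | .vert _ => ∅
  | .edge h => {h}
  | .cyc _ e => Finset.univ.image e

/-- Validity of a (degenerate) linear cycle with respect to the edge set `E` of a
hypergraph: a vertex is always valid, a single hyperedge must belong to `E`, and a
proper cyclic sequence must consist of at least 3 hyperedges of `E` such that
consecutive hyperedges (cyclically) intersect in exactly one vertex, and
nonconsecutive hyperedges are disjoint. -/
def LinCyc.valid {V : Type*} [DecidableEq V] (E : Finset (Finset V)) : LinCyc V → Prop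
  | .vert _ => True
  | .edge h => h ∈ E
  | .cyc n e => 3 ≤ n ∧ (∀ i, e i ∈ E) ∧
      (∀ i j : Fin n, ((i : ℕ) + 1) % n = (j : ℕ) → (e i ∩ e j).card = 1) ∧
      (∀ i j : Fin n, i ≠ j → ((i : ℕ) + 1) % n ≠ (j : ℕ) →
        ((j : ℕ) + 1) % n ≠ (i : ℕ) → e i ∩ e j = ∅)

/-- The independence number of the hypergraph with edge set `E`: the maximum size of
a vertex subset containing no hyperedge. -/
def indepNum {V : Type*} [Fintype V] [DecidableEq V] (E : Finset (Finset V)) : ℕ :=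
  Finset.sup (Finset.univ.powerset.filter fun S => ∀ h ∈ E, ¬ h ⊆ S) Finset.card

/-- A linear path: a sequence of hyperedges of `E` where consecutive hyperedges
intersect in exactly one vertex and nonconsecutive hyperedges are disjoint. -/
def IsLinearPath {V : Type*} [DecidableEq V] (E : Finset (Finset V))
    {n : ℕ} (e : Fin n → Finset V) : Prop :=
  (∀ i, e i ∈ E) ∧
  (∀ i j : Fin n, (i : ℕ) + 1 = (j : ℕ) → (e i ∩ e j).card = 1) ∧
  (∀ i j : Fin n, (i : ℕ) + 1 < (j : ℕ) → e i ∩ e j = ∅)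

/-!
Pósa's argument. In a nonempty vertex set `W`, take a path `v = x₀, x₁, …, xₘ` in `G[W]` that cannot
be extended at `v`, so that every neighbour of `v` in `W` lies on it. If `xₖ` is the last neighbour
of `v` on the path, then `x₀ … xₖ` closes up to a cycle `C` (a vertex if `k = 0`, an edge if
`k = 1`) containing `v` and all its neighbours in `W`. Hence `v` can be added to every independent
set of `W \ C`, so the independence number drops by at least one when `C` is removed, and
induction on `W` finishes the proof.
-/

theorem val_finRotate {n : ℕ} (i : Fin n) : (finRotate n i : ℕ) = (i + 1) % n := by
  rw [finRotate_apply]; simp [Fin.val_add]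

theorem Nat.add_one_mod_eq_ite {i n : ℕ} (h : i < n) :
    (i + 1) % n = if i + 1 = n then 0 else i + 1 := by
  split_ifs with h'
  · simp [h']
  · exact Nat.mod_eq_of_lt (by omega)

theorem finRotate_ne_self {n : ℕ} (hn : 2 ≤ n) (i : Fin n) : finRotate n i ≠ i := by
  rw [Ne, Fin.ext_iff, val_finRotate, Nat.add_one_mod_eq_ite i.isLt]
  split_ifs <;> omega

theorem finRotate_finRotate_ne_self {n : ℕ} (hn : 3 ≤ n) (i : Fin n) :
    finRotate n (finRotate n i) ≠ i := by
  rw [Ne, Fin.ext_iff, val_finRotate, val_finRotate, Nat.add_one_mod_eq_ite i.isLt]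
  split_ifs <;> rw [Nat.add_one_mod_eq_ite (by omega)] <;> split_ifs <;> omega

theorem Fin.existsUnique_succ_iff {k : ℕ} {P : Fin (k + 1) → Prop} :
    (∃! i, P i) ↔ (P 0 ∧ ∀ i : Fin k, ¬ P i.succ) ∨ (¬ P 0 ∧ ∃! i : Fin k, P i.succ) := by
  simp only [ExistsUnique, Fin.exists_fin_succ, Fin.forall_fin_succ, Fin.succ_ne_zero,
    (Fin.succ_ne_zero _).symm, Fin.succ_inj]
  grind

namespace SimpleGraph

variable {V : Type*} [DecidableEq V] (G : SimpleGraph V)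

theorem exists_nonextendable_path {W : Finset V} (hW : W.Nonempty) :
    ∃ v t, (v :: t).Nodup ∧ (v :: t).toFinset ⊆ W ∧ (v :: t).IsChain G.Adj ∧
      ∀ w ∈ W, G.Adj v w → w ∈ v :: t := by
  by_contra! hext
  have hpath : ∀ k, ∃ v t, (v :: t).Nodup ∧ (v :: t).toFinset ⊆ W ∧
      (v :: t).IsChain G.Adj ∧ t.length = k := by
    intro k
    induction k with
    | zero =>
      obtain ⟨v, hv⟩ := hW
      exact ⟨v, [], by simp, by simpa, .singleton v, rfl⟩
    | succ k ih =>
      obtain ⟨v, t, hnd, hsub, hch, rfl⟩ := ih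
      obtain ⟨w, hw, hvw, hwl⟩ := hext v t hnd hsub hch
      refine ⟨w, v :: t, hnd.cons hwl, ?_, hch.cons_cons hvw.symm, rfl⟩
      rw [List.toFinset_cons, insert_subset_iff]
      exact ⟨hw, hsub⟩
  obtain ⟨v, t, hnd, hsub, -, hlen⟩ := hpath W.card
  have := card_le_card hsub
  rw [List.toFinset_card_of_nodup hnd, List.length_cons] at this
  omega

variable [DecidableRel G.Adj]

def indepNumOn (W : Finset V) : ℕ :=
  (W.powerset.filter fun S => ∀ a ∈ S, ∀ b ∈ S, ¬ G.Adj a b).sup card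

theorem indepNumOn_sdiff_add_one_le {W C : Finset V} {v : V} (hvW : v ∈ W) (hvC : v ∈ C)
    (hnbr : ∀ w ∈ W, G.Adj v w → w ∈ C) : G.indepNumOn (W \ C) + 1 ≤ G.indepNumOn W := by
  obtain ⟨S, hS, hSmax⟩ := exists_mem_eq_sup
    ((W \ C).powerset.filter fun S => ∀ a ∈ S, ∀ b ∈ S, ¬ G.Adj a b) ⟨∅, by simp⟩ card
  simp only [mem_filter, mem_powerset, subset_sdiff] at hS
  obtain ⟨⟨hSW, hSC⟩, hSind⟩ := hS
  have hvS : v ∉ S := fun h => Finset.disjoint_right.1 hSC hvC h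
  have hins : insert v S ∈ W.powerset.filter fun S => ∀ a ∈ S, ∀ b ∈ S, ¬ G.Adj a b := by
    simp only [mem_filter, mem_powerset, insert_subset_iff, mem_insert]
    refine ⟨⟨hvW, hSW⟩, ?_⟩
    rintro a (rfl | ha) b (rfl | hb) hab
    · exact G.irrefl hab
    · exact Finset.disjoint_left.1 hSC hb (hnbr b (hSW hb) hab)
    · exact Finset.disjoint_left.1 hSC ha (hnbr a (hSW ha) hab.symm)
    · exact hSind a ha b hb hab
  calc G.indepNumOn (W \ C) + 1 = (insert v S).card := by
        rw [indepNumOn, hSmax, card_insert_of_notMem hvS]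
    _ ≤ G.indepNumOn W := le_sup hins

end SimpleGraph

section Cycles

variable {V : Type*} [DecidableEq V] {E : Finset (Finset V)}

theorem LinCyc.valid_cyc_of_injective {n : ℕ} (hn : 3 ≤ n) {u : Fin n → V}
    (hu : Function.Injective u) (hE : ∀ i, {u i, u (finRotate n i)} ∈ E) :
    (LinCyc.cyc n fun i => {u i, u (finRotate n i)}).valid E := by
  have hσ : ∀ i j : Fin n, ((i : ℕ) + 1) % n = j ↔ finRotate n i = j := fun i j => by
    rw [Fin.ext_iff, val_finRotate]
  refine ⟨hn, hE, fun i j hij => ?_, fun i j hne hij hji => ?_⟩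
  · obtain rfl := (hσ i j).1 hij
    have h01 := finRotate_ne_self (by omega) i
    have h02 := finRotate_finRotate_ne_self hn i
    have h12 := finRotate_ne_self (by omega) (finRotate n i)
    rw [Finset.card_eq_one]
    refine ⟨u (finRotate n i), ?_⟩
    ext x
    simp only [mem_inter, mem_insert, mem_singleton]
    grind [hu.eq_iff]
  · rw [Ne, hσ] at hij hji
    have hσne := (finRotate n).injective.ne hne
    ext x
    simp only [mem_inter, mem_insert, mem_singleton, Finset.notMem_empty, iff_false]
    grind [hu.eq_iff]

theorem LinCyc.verts_cyc_pairs {n : ℕ} (u : Fin n → V) :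
    (LinCyc.cyc n fun i => {u i, u (finRotate n i)}).verts = univ.image u := by
  ext x
  simp only [LinCyc.verts, mem_biUnion, mem_univ, true_and, mem_insert, mem_singleton, mem_image]
  constructor
  · rintro ⟨i, rfl | rfl⟩ <;> exact ⟨_, rfl⟩
  · rintro ⟨i, rfl⟩; exact ⟨i, Or.inl rfl⟩

variable {G : SimpleGraph V}

theorem LinCyc.exists_valid_verts_eq_toFinset_of_three_le
    (hE : ∀ a b, G.Adj a b → ({a, b} : Finset V) ∈ E) {l : List V} (hl : l ≠ [])
    (hn : 3 ≤ l.length) (hnd : l.Nodup) (hch : l.IsChain G.Adj)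
    (hclose : G.Adj (l.getLast hl) (l.head hl)) :
    ∃ C : LinCyc V, C.valid E ∧ C.verts = l.toFinset := by
  have hadj : ∀ i, G.Adj (l.get i) (l.get (finRotate _ i)) := by
    intro i
    have hσ := val_finRotate i
    rw [Nat.add_one_mod_eq_ite i.isLt] at hσ
    split_ifs at hσ with h
    · rw [show finRotate _ i = ⟨0, by omega⟩ from Fin.ext hσ]
      rw [List.getLast_eq_getElem, List.head_eq_getElem] at hclose
      simpa [show (i : ℕ) = l.length - 1 by omega] using hclose
    · rw [show finRotate _ i = ⟨i + 1, by omega⟩ from Fin.ext hσ]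
      exact hch.getElem i (by omega)
  refine ⟨_, LinCyc.valid_cyc_of_injective hn (List.nodup_iff_injective_get.1 hnd)
    fun i => hE _ _ (hadj i), ?_⟩
  rw [LinCyc.verts_cyc_pairs]
  ext x
  simp [List.mem_iff_get]

theorem LinCyc.exists_valid_verts_eq_toFinset
    (hE : ∀ a b, G.Adj a b → ({a, b} : Finset V) ∈ E) {l : List V} (hl : l ≠ [])
    (hnd : l.Nodup) (hch : l.IsChain G.Adj)
    (hclose : 3 ≤ l.length → G.Adj (l.getLast hl) (l.head hl)) :
    ∃ C : LinCyc V, C.valid E ∧ C.verts = l.toFinset := by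
  match l, hl, hnd, hch, hclose with
  | [a], _, _, _, _ => exact ⟨.vert a, trivial, by simp [LinCyc.verts]⟩
  | [a, b], _, _, hch, _ =>
    exact ⟨.edge {a, b}, hE a b (List.isChain_pair.1 hch), by simp [LinCyc.verts]⟩
  | _ :: _ :: _ :: _, hl, hnd, hch, hclose =>
    exact exists_valid_verts_eq_toFinset_of_three_le hE hl (by simp) hnd hch (hclose (by simp))

theorem LinCyc.exists_valid_subset_forall_adj_mem
    (hE : ∀ a b, G.Adj a b → ({a, b} : Finset V) ∈ E) {W : Finset V} (hW : W.Nonempty) :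
    ∃ C : LinCyc V, C.valid E ∧ C.verts ⊆ W ∧
      ∃ v ∈ C.verts, ∀ w ∈ W, G.Adj v w → w ∈ C.verts := by
  classical
  obtain ⟨v, t, hnd, hsub, hch, hmax⟩ := G.exists_nonextendable_path hW
  set k := Nat.findGreatest (fun j => ∃ h : j < (v :: t).length, G.Adj v (v :: t)[j]) t.length
    with hk
  have hkt : k ≤ t.length := Nat.findGreatest_le _
  have hpref : (v :: t.take k).Sublist (v :: t) := (List.take_sublist k t).cons_cons v
  obtain ⟨C, hC, hCverts⟩ := LinCyc.exists_valid_verts_eq_toFinset (l := v :: t.take k) hE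
    (List.cons_ne_nil _ _) (hnd.sublist hpref) (hch.take (k + 1))
    fun h3 => by
      have hk0 : k ≠ 0 := by simp at h3; omega
      obtain ⟨_, hadj⟩ := Nat.findGreatest_of_ne_zero hk.symm hk0
      simpa [List.getLast_eq_getElem, Nat.min_eq_left hkt, List.getElem_cons, hk0] using hadj.symm
  refine ⟨C, hC, ?_, v, by simp [hCverts], fun w hw hvw => ?_⟩
  · rw [hCverts]
    exact fun x hx => hsub (List.mem_toFinset.2 (hpref.subset (List.mem_toFinset.1 hx)))
  · obtain ⟨i, hi, rfl⟩ := List.mem_iff_getElem.1 (hmax w hw hvw)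
    have hik : i ≤ k := Nat.le_findGreatest (by simp at hi; omega) ⟨hi, hvw⟩
    rw [hCverts, List.mem_toFinset, ← List.take_succ_cons, List.mem_take_iff_getElem]
    exact ⟨i, by omega, rfl⟩

theorem LinCyc.exists_partition_card_le_indepNumOn [DecidableRel G.Adj]
    (hE : ∀ a b, G.Adj a b → ({a, b} : Finset V) ∈ E) (W : Finset V) :
    ∃ (k : ℕ) (c : Fin k → LinCyc V), k ≤ G.indepNumOn W ∧ (∀ i, (c i).valid E) ∧
      (∀ i, (c i).verts ⊆ W) ∧ ∀ x ∈ W, ∃! i, x ∈ (c i).verts := by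
  induction W using Finset.strongInduction with
  | H W ih =>
  obtain rfl | hW := W.eq_empty_or_nonempty
  · exact ⟨0, Fin.elim0, Nat.zero_le _, fun i => i.elim0, fun i => i.elim0, by simp⟩
  obtain ⟨C, hC, hCW, v, hvC, hnbr⟩ := exists_valid_subset_forall_adj_mem hE hW
  obtain ⟨k, c, hk, hc, hcW, huniq⟩ := ih (W \ C.verts) (sdiff_ssubset hCW ⟨v, hvC⟩)
  refine ⟨k + 1, Fin.cons C c, ?_, Fin.cases hC hc,
    Fin.cases hCW fun i => (hcW i).trans sdiff_subset, fun x hx => ?_⟩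
  · exact (Nat.add_le_add_right hk 1).trans (G.indepNumOn_sdiff_add_one_le (hCW hvC) hvC hnbr)
  · simp only [Fin.existsUnique_succ_iff, Fin.cons_zero, Fin.cons_succ]
    by_cases hxC : x ∈ C.verts
    · exact Or.inl ⟨hxC, fun i hi => (mem_sdiff.1 (hcW i hi)).2 hxC⟩
    · exact Or.inr ⟨hxC, huniq x (mem_sdiff.2 ⟨hx, hxC⟩)⟩

end Cycles

/-- Pósa's theorem: the vertex set of every finite simple graph `G` can be
partitioned into at most `α(G)` vertex-disjoint cycles, where a single vertex or a
single edge is accepted as a cycle.  The graph is encoded as the set `E` of its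
2-element edges, so that a valid linear cycle all of whose hyperedges are 2-element
sets is exactly a graph cycle. -/
theorem posa_partition_into_cycles
    {V : Type*} [Fintype V] [DecidableEq V] (G : SimpleGraph V) [DecidableRel G.Adj]
    (E : Finset (Finset V))
    (hE : ∀ e : Finset V, e ∈ E ↔ ∃ a b : V, G.Adj a b ∧ e = {a, b}) :
    ∃ (k : ℕ) (c : Fin k → LinCyc V),
      k ≤ Finset.sup
        (Finset.univ.powerset.filter fun S : Finset V =>
          ∀ a ∈ S, ∀ b ∈ S, ¬ G.Adj a b) Finset.card ∧
      (∀ i, (c i).valid E) ∧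
      (∀ x : V, ∃! i, x ∈ (c i).verts) := by
  obtain ⟨k, c, hk, hc, -, huniq⟩ :=
    LinCyc.exists_partition_card_le_indepNumOn (fun a b h => (hE _).2 ⟨a, b, h, rfl⟩) (Finset.univ : Finset V)
  refine ⟨k, c, ?_, hc, fun x => huniq x (mem_univ x)⟩
  -- the two filters differ only in their (subsingleton) decidability instances
  unfold SimpleGraph.indepNumOn at hk
  convert hk
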